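/- Let P and P' be transition probability kernels on ℝ^d such that for every f ∈ Lip₁, Pf is l(P)-Lipschitz and P'f is l(P')-Lipschitz. For μ ∈ P(ℝ^d), α ∈ (0,1), define R_μ^α(x,·) = (1−α)P(x,·) + α (μP')(·). Then for probabilities η, η' with finite first moment and μ, μ' with finite first moment, W₁(η R_μ^α, η' R_{μ'}^α) ≤ (1−α) l(P) W₁(η, η') + α l(P') W₁(μ, μ'). -/

import Mathlib

/-!
For a 1-Lipschitz `f`, integrating against `η R_μ^α` gives `(1 - α) ∫ Pf dη + α ∫ P'f dμ`, and
`Pf`, `P'f` are `l(P)`- and `l(P')`-Lipschitz, so the dual definition of `W₁` bounds the two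
differences by `l(P) W₁(η, η')` and `l(P') W₁(μ, μ')`.

The only subtlety is integrability. Lipschitz functions are integrable against laws with a finite
first moment, and applying the hypothesis on `P` to the bounded truncations `min |f| n` shows that
`f` is `P x`-integrable either for every `x` or for none.
-/

open MeasureTheory ProbabilityTheory
open scoped NNReal

/-- Wasserstein-1 distance via Kantorovich-Rubinstein duality. -/
noncomputable def W1 {d : ℕ} (μ ν : Measure (EuclideanSpace ℝ (Fin d))) : ℝ :=
  sSup {r | ∃ f : EuclideanSpace ℝ (Fin d) → ℝ,
    LipschitzWith 1 f ∧ r = |(∫ x, f x ∂μ) - ∫ x, f x ∂ν|}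

section FirstMoment

variable {E : Type*} [SeminormedAddCommGroup E] [MeasurableSpace E] [OpensMeasurableSpace E]
  {μ : Measure E} {f : E → ℝ}

lemma LipschitzWith.integrable_of_integrable_norm {K : ℝ≥0} (hf : LipschitzWith K f)
    [IsFiniteMeasure μ] (hμ : Integrable (fun x => ‖x‖) μ) : Integrable f μ := by
  refine ((integrable_const |f 0|).add (hμ.const_mul K)).mono'
    hf.continuous.aestronglyMeasurable (ae_of_all _ fun x => ?_)
  have h := hf.dist_le_mul x 0
  rw [Real.dist_eq, dist_zero_right] at h
  have := abs_sub_abs_le_abs_sub (f x) (f 0)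
  simp only [Real.norm_eq_abs, Pi.add_apply]
  linarith

lemma LipschitzWith.abs_integral_sub_apply_zero_le (hf : LipschitzWith 1 f)
    [IsProbabilityMeasure μ] (hμ : Integrable (fun x => ‖x‖) μ) :
    |∫ x, f x ∂μ - f 0| ≤ ∫ x, ‖x‖ ∂μ := by
  have hsub : ∫ x, (f x - f 0) ∂μ = ∫ x, f x ∂μ - f 0 := by
    simp [integral_sub (hf.integrable_of_integrable_norm hμ) (integrable_const _)]
  rw [← hsub, ← Real.norm_eq_abs]
  refine norm_integral_le_of_norm_le hμ (ae_of_all _ fun x => ?_)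
  simpa [Real.dist_eq] using hf.dist_le_mul x 0

end FirstMoment

lemma MeasureTheory.integrable_of_integral_min_abs_le {Y : Type*} [MeasurableSpace Y]
    {μ : Measure Y} [IsFiniteMeasure μ] {f : Y → ℝ} (hf : AEStronglyMeasurable f μ) (C : ℝ)
    (hC : ∀ n : ℕ, ∫ y, min |f y| n ∂μ ≤ C) : Integrable f μ := by
  have hnonneg (n : ℕ) (y : Y) : 0 ≤ min |f y| n := le_min (abs_nonneg _) n.cast_nonneg
  have hint (n : ℕ) : Integrable (fun y => min |f y| n) μ :=
    (integrable_const (n : ℝ)).mono' (hf.norm.inf aestronglyMeasurable_const)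
      (ae_of_all _ fun y => by simp [abs_of_nonneg (hnonneg n y)])
  have htrunc (n : ℕ) : ∫⁻ y, min ‖f y‖ₑ n ∂μ ≤ ENNReal.ofReal C := by
    have := ofReal_integral_eq_lintegral_ofReal (hint n) (ae_of_all _ (hnonneg n))
    simp only [ENNReal.ofReal_min, ENNReal.ofReal_natCast, ← Real.norm_eq_abs, ofReal_norm] at this
    rw [← this]
    exact ENNReal.ofReal_le_ofReal (hC n)
  refine ⟨hf, lt_of_le_of_lt ?_ (ENNReal.ofReal_lt_top (r := C))⟩
  refine le_of_tendsto' (lintegral_tendsto_of_tendsto_of_monotone (fun n => ?_) ?_ ?_) htrunc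
  · exact hf.enorm.min aemeasurable_const
  · exact ae_of_all _ fun y n m hnm => min_le_min le_rfl (by exact_mod_cast hnm)
  · refine ae_of_all _ fun y => ?_
    simpa using tendsto_const_nhds.min ENNReal.tendsto_nat_nhds_top

section Wasserstein

variable {d : ℕ} {η η' : Measure (EuclideanSpace ℝ (Fin d))} [IsProbabilityMeasure η]
  [IsProbabilityMeasure η']

lemma bddAbove_W1_set (hη : Integrable (fun x => ‖x‖) η)
    (hη' : Integrable (fun x => ‖x‖) η') :
    BddAbove {r | ∃ f : EuclideanSpace ℝ (Fin d) → ℝ,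
      LipschitzWith 1 f ∧ r = |(∫ x, f x ∂η) - ∫ x, f x ∂η'|} := by
  refine ⟨(∫ x, ‖x‖ ∂η) + ∫ x, ‖x‖ ∂η', ?_⟩
  rintro r ⟨f, hf, rfl⟩
  have h := hf.abs_integral_sub_apply_zero_le hη
  have h' := hf.abs_integral_sub_apply_zero_le hη'
  have := abs_sub_le (∫ x, f x ∂η) (f 0) (∫ x, f x ∂η')
  rw [abs_sub_comm (f 0)] at this
  linarith

lemma LipschitzWith.abs_integral_sub_le_W1 {f : EuclideanSpace ℝ (Fin d) → ℝ}
    (hf : LipschitzWith 1 f) (hη : Integrable (fun x => ‖x‖) η)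
    (hη' : Integrable (fun x => ‖x‖) η') : |(∫ x, f x ∂η) - ∫ x, f x ∂η'| ≤ W1 η η' :=
  le_csSup (bddAbove_W1_set hη hη') ⟨f, hf, rfl⟩

lemma W1_nonneg (hη : Integrable (fun x => ‖x‖) η) (hη' : Integrable (fun x => ‖x‖) η') :
    0 ≤ W1 η η' :=
  (abs_nonneg _).trans
    (((LipschitzWith.const (0 : ℝ)).weaken zero_le_one).abs_integral_sub_le_W1 hη hη')

lemma LipschitzWith.abs_integral_sub_le_mul_W1 {K : ℝ≥0} {g : EuclideanSpace ℝ (Fin d) → ℝ}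
    (hg : LipschitzWith K g) (hη : Integrable (fun x => ‖x‖) η)
    (hη' : Integrable (fun x => ‖x‖) η') : |(∫ x, g x ∂η) - ∫ x, g x ∂η'| ≤ K * W1 η η' := by
  rcases eq_or_ne K 0 with rfl | hK
  · obtain ⟨c, rfl⟩ : ∃ c, g = fun _ => c :=
      ⟨g 0, funext fun x => (LipschitzWith.zero_iff g).1 hg x 0⟩
    simp
  · have hf : LipschitzWith 1 fun x => (K : ℝ)⁻¹ • g x := by
      simpa [nnnorm_inv, hK, Function.comp_def] using (lipschitzWith_smul (K : ℝ)⁻¹).comp hg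
    have := hf.abs_integral_sub_le_W1 hη hη'
    rw [integral_smul, integral_smul, ← smul_sub, abs_smul, smul_eq_mul, abs_inv, NNReal.abs_eq,
      inv_mul_le_iff₀ (by positivity)] at this
    exact this

end Wasserstein

section LipschitzTruncation

variable {Y : Type*} [PseudoMetricSpace Y] {K : ℝ≥0} {f : Y → ℝ}

lemma LipschitzWith.abs (hf : LipschitzWith K f) : LipschitzWith K fun y => |f y| := by
  simpa [Function.comp_def] using lipschitzWith_one_norm.comp hf

lemma LipschitzWith.min_abs_natCast (hf : LipschitzWith 1 f) (n : ℕ) :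
    LipschitzWith 1 fun y => min |f y| n := by
  simpa using hf.abs.min (LipschitzWith.const (n : ℝ))

end LipschitzTruncation

section MeasureCombination

variable {Y E : Type*} [MeasurableSpace Y] [NormedAddCommGroup E] {f : Y → E} {a b : ℝ}
  {ρ₁ ρ₂ : Measure Y}

lemma MeasureTheory.integrable_ofReal_smul_add_ofReal_smul_iff (ha : 0 < a) (hb : 0 < b) :
    Integrable f (ENNReal.ofReal a • ρ₁ + ENNReal.ofReal b • ρ₂) ↔
      Integrable f ρ₁ ∧ Integrable f ρ₂ := by
  rw [integrable_add_measure,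
    integrable_smul_measure (ENNReal.ofReal_pos.2 ha).ne' ENNReal.ofReal_ne_top,
    integrable_smul_measure (ENNReal.ofReal_pos.2 hb).ne' ENNReal.ofReal_ne_top]

lemma MeasureTheory.integral_ofReal_smul_add_ofReal_smul [NormedSpace ℝ E] (ha : 0 ≤ a)
    (hb : 0 ≤ b) (h₁ : Integrable f ρ₁) (h₂ : Integrable f ρ₂) :
    ∫ y, f y ∂(ENNReal.ofReal a • ρ₁ + ENNReal.ofReal b • ρ₂) =
      a • ∫ y, f y ∂ρ₁ + b • ∫ y, f y ∂ρ₂ := by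
  rw [integral_add_measure (h₁.smul_measure ENNReal.ofReal_ne_top)
    (h₂.smul_measure ENNReal.ofReal_ne_top), integral_smul_measure, integral_smul_measure,
    ENNReal.toReal_ofReal ha, ENNReal.toReal_ofReal hb]

lemma MeasureTheory.Measure.integral_bind [NormedSpace ℝ E] {X : Type*} [MeasurableSpace X]
    {η : Measure X} {P : Kernel X Y} (hf : Integrable f (η.bind P)) :
    ∫ y, f y ∂(η.bind P) = ∫ x, ∫ y, f y ∂(P x) ∂η := by
  rw [Measure.comp_eq_comp_const_apply] at hf ⊢
  simpa [Kernel.comp_apply] using Kernel.integral_comp hf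

end MeasureCombination

namespace ProbabilityTheory.Kernel

variable {X Y : Type*} [MeasurableSpace X] [MeasurableSpace Y] [PseudoMetricSpace Y]
  [OpensMeasurableSpace Y] {f : Y → ℝ} {l : ℝ≥0}

def MapsLipschitz [PseudoMetricSpace X] (P : Kernel X Y) (l : ℝ≥0) : Prop :=
  ∀ f : Y → ℝ, LipschitzWith 1 f → LipschitzWith l fun x => ∫ y, f y ∂(P x)

-- The hypothesis on `P` only controls `∫ f ∂(P x)`, a junk value when `f` is not integrable;
-- the bounded truncations `min |f| n` are always integrable.
lemma MapsLipschitz.integrable_apply [PseudoMetricSpace X] {P : Kernel X Y} [IsFiniteKernel P]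
    (hP : P.MapsLipschitz l) (hf : LipschitzWith 1 f) {x₀ : X} (h₀ : Integrable f (P x₀))
    (x : X) : Integrable f (P x) := by
  refine integrable_of_integral_min_abs_le hf.continuous.aestronglyMeasurable
    ((∫ y, |f y| ∂(P x₀)) + l * dist x x₀) fun n => ?_
  have hshift := (le_abs_self _).trans (((hP _ (hf.min_abs_natCast n)).dist_le_mul x x₀))
  have htrunc : ∫ y, min |f y| n ∂(P x₀) ≤ ∫ y, |f y| ∂(P x₀) :=
    integral_mono_of_nonneg (ae_of_all _ fun y => le_min (abs_nonneg _) n.cast_nonneg) h₀.abs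
      (ae_of_all _ fun y => min_le_left _ _)
  linarith

lemma MapsLipschitz.integrable_bind_iff [SeminormedAddCommGroup X] [OpensMeasurableSpace X]
    {P : Kernel X Y} [IsFiniteKernel P] (hP : P.MapsLipschitz l) (hf : LipschitzWith 1 f)
    {η : Measure X} [IsProbabilityMeasure η] (hη : Integrable (fun x => ‖x‖) η) :
    Integrable f (η.bind P) ↔ ∀ x, Integrable f (P x) := by
  rw [Measure.integrable_comp_iff hf.continuous.aestronglyMeasurable]
  refine ⟨fun ⟨h, _⟩ => ?_, fun h => ⟨ae_of_all _ h, ?_⟩⟩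
  · obtain ⟨x₀, hx₀⟩ := h.exists
    exact hP.integrable_apply hf hx₀
  · simpa only [Real.norm_eq_abs] using (hP _ hf.abs).integrable_of_integrable_norm hη

lemma MapsLipschitz.abs_integral_bind_sub_le {d : ℕ} {P : Kernel (EuclideanSpace ℝ (Fin d)) Y}
    [IsFiniteKernel P] (hP : P.MapsLipschitz l) (hf : LipschitzWith 1 f)
    (hPf : ∀ x, Integrable f (P x)) {η η' : Measure (EuclideanSpace ℝ (Fin d))}
    [IsProbabilityMeasure η] [IsProbabilityMeasure η'] (hη : Integrable (fun x => ‖x‖) η)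
    (hη' : Integrable (fun x => ‖x‖) η') :
    |∫ y, f y ∂(η.bind P) - ∫ y, f y ∂(η'.bind P)| ≤ l * W1 η η' := by
  rw [Measure.integral_bind ((hP.integrable_bind_iff hf hη).2 hPf),
    Measure.integral_bind ((hP.integrable_bind_iff hf hη').2 hPf)]
  exact (hP f hf).abs_integral_sub_le_mul_W1 hη hη'

end ProbabilityTheory.Kernel

section Mixture

variable {d : ℕ} {Y : Type*} [MeasurableSpace Y] [PseudoMetricSpace Y] [OpensMeasurableSpace Y]
  {P P' : Kernel (EuclideanSpace ℝ (Fin d)) Y} [IsFiniteKernel P] [IsFiniteKernel P']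
  {l l' : ℝ≥0} {f : Y → ℝ} {α : ℝ} {η η' μ μ' : Measure (EuclideanSpace ℝ (Fin d))}
  [IsProbabilityMeasure η] [IsProbabilityMeasure η'] [IsProbabilityMeasure μ]
  [IsProbabilityMeasure μ']

lemma integrable_mixture_bind_iff (hP : P.MapsLipschitz l) (hP' : P'.MapsLipschitz l')
    (hα : α ∈ Set.Ioo 0 1) (hf : LipschitzWith 1 f) (hη : Integrable (fun x => ‖x‖) η)
    (hμ : Integrable (fun x => ‖x‖) μ) :
    Integrable f (ENNReal.ofReal (1 - α) • η.bind P + ENNReal.ofReal α • μ.bind P') ↔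
      (∀ x, Integrable f (P x)) ∧ ∀ x, Integrable f (P' x) := by
  rw [integrable_ofReal_smul_add_ofReal_smul_iff (sub_pos.2 hα.2) hα.1,
    hP.integrable_bind_iff hf hη, hP'.integrable_bind_iff hf hμ]

lemma abs_integral_mixture_bind_sub_le (hP : P.MapsLipschitz l) (hP' : P'.MapsLipschitz l')
    (hα : α ∈ Set.Icc 0 1) (hf : LipschitzWith 1 f) (hPf : ∀ x, Integrable f (P x))
    (hP'f : ∀ x, Integrable f (P' x)) (hη : Integrable (fun x => ‖x‖) η)
    (hη' : Integrable (fun x => ‖x‖) η') (hμ : Integrable (fun x => ‖x‖) μ)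
    (hμ' : Integrable (fun x => ‖x‖) μ') :
    |∫ y, f y ∂(ENNReal.ofReal (1 - α) • η.bind P + ENNReal.ofReal α • μ.bind P')
      - ∫ y, f y ∂(ENNReal.ofReal (1 - α) • η'.bind P + ENNReal.ofReal α • μ'.bind P')|
      ≤ (1 - α) * l * W1 η η' + α * l' * W1 μ μ' := by
  obtain ⟨hα0, hα1⟩ := hα
  have hint {Q : Kernel (EuclideanSpace ℝ (Fin d)) Y} [IsFiniteKernel Q] {k : ℝ≥0}
      (hQ : Q.MapsLipschitz k) (hQf : ∀ x, Integrable f (Q x))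
      {ν : Measure (EuclideanSpace ℝ (Fin d))} [IsProbabilityMeasure ν]
      (hν : Integrable (fun x => ‖x‖) ν) : Integrable f (ν.bind Q) :=
    (hQ.integrable_bind_iff hf hν).2 hQf
  rw [integral_ofReal_smul_add_ofReal_smul (sub_nonneg.2 hα1) hα0 (hint hP hPf hη)
      (hint hP' hP'f hμ),
    integral_ofReal_smul_add_ofReal_smul (sub_nonneg.2 hα1) hα0 (hint hP hPf hη')
      (hint hP' hP'f hμ')]
  calc _ = |(1 - α) * (∫ y, f y ∂η.bind P - ∫ y, f y ∂η'.bind P)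
          + α * (∫ y, f y ∂μ.bind P' - ∫ y, f y ∂μ'.bind P')| := by
        simp only [smul_eq_mul]; ring_nf
    _ ≤ (1 - α) * |∫ y, f y ∂η.bind P - ∫ y, f y ∂η'.bind P|
          + α * |∫ y, f y ∂μ.bind P' - ∫ y, f y ∂μ'.bind P'| := by
        grw [abs_add_le, abs_mul, abs_mul, abs_of_nonneg hα0, abs_of_nonneg (sub_nonneg.2 hα1)]
    _ ≤ _ := by
        grw [hP.abs_integral_bind_sub_le hf hPf hη hη',
          hP'.abs_integral_bind_sub_le hf hP'f hμ hμ', mul_assoc, mul_assoc]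

end Mixture

/-- One-step contraction for the chemical-field update kernel
    `R_μ^α = (1-α) P + α μP'`. -/
theorem stmt13 (d : ℕ)
    (P P' : Kernel (EuclideanSpace ℝ (Fin d)) (EuclideanSpace ℝ (Fin d)))
    [IsMarkovKernel P] [IsMarkovKernel P'] (lP lP' : ℝ≥0)
    (hP : ∀ f : EuclideanSpace ℝ (Fin d) → ℝ, LipschitzWith 1 f →
      LipschitzWith lP (fun x => ∫ y, f y ∂(P x)))
    (hP' : ∀ f : EuclideanSpace ℝ (Fin d) → ℝ, LipschitzWith 1 f →
      LipschitzWith lP' (fun x => ∫ y, f y ∂(P' x)))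
    (α : ℝ) (hα : α ∈ Set.Ioo (0 : ℝ) 1)
    (η η' μ μ' : Measure (EuclideanSpace ℝ (Fin d)))
    [IsProbabilityMeasure η] [IsProbabilityMeasure η']
    [IsProbabilityMeasure μ] [IsProbabilityMeasure μ']
    (hη : Integrable (fun x => ‖x‖) η) (hη' : Integrable (fun x => ‖x‖) η')
    (hμ : Integrable (fun x => ‖x‖) μ) (hμ' : Integrable (fun x => ‖x‖) μ') :
    W1 (ENNReal.ofReal (1 - α) • η.bind (fun x => P x)
          + ENNReal.ofReal α • μ.bind (fun x => P' x))
       (ENNReal.ofReal (1 - α) • η'.bind (fun x => P x)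
          + ENNReal.ofReal α • μ'.bind (fun x => P' x))
      ≤ (1 - α) * lP * W1 η η' + α * lP' * W1 μ μ' := by
  have hRHS : 0 ≤ (1 - α) * lP * W1 η η' + α * lP' * W1 μ μ' :=
    add_nonneg (mul_nonneg (mul_nonneg (sub_nonneg.2 hα.2.le) lP.2) (W1_nonneg hη hη'))
      (mul_nonneg (mul_nonneg hα.1.le lP'.2) (W1_nonneg hμ hμ'))
  refine Real.sSup_le ?_ hRHS
  rintro _ ⟨f, hf, rfl⟩
  -- Integrability against either mixture does not depend on the initial laws, so either all
  -- four integrals are genuine or both sides are the junk value `0`.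
  by_cases hPf : (∀ x, Integrable f (P x)) ∧ ∀ x, Integrable f (P' x)
  · exact abs_integral_mixture_bind_sub_le hP hP' (Set.Ioo_subset_Icc_self hα) hf hPf.1 hPf.2
      hη hη' hμ hμ'
  · rw [integral_undef (mt (integrable_mixture_bind_iff hP hP' hα hf hη hμ).1 hPf),
      integral_undef (mt (integrable_mixture_bind_iff hP hP' hα hf hη' hμ').1 hPf)]
    simpa using hRHS
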